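/- Let G be a group with an abelian normal subgroup S of index a prime p, such that the set of left Engel elements L(G) is a subgroup of G. If L(G) is not contained in S, then G is an Engel group (every element of G is left Engel). -/

import Mathlib

/-
Every element `s` of the abelian normal subgroup `S` is left Engel: `[x, s]` lies in `S`, hence
commutes with `s`, so `[x, s, s] = 1`. Thus `S ≤ L(G)`, and if `L(G) ⊄ S` then `L(G)` strictly
contains a subgroup of prime index, which forces `L(G) = G`.
-/

/-- Iterated commutator `[x, g, ..., g]` (with `n` copies of `g`), where
`[x,g] = x⁻¹g⁻¹xg`, `engel x g 0 = x`. -/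
def engel {G : Type*} [Group G] (x g : G) : ℕ → G
  | 0 => x
  | n + 1 => (engel x g n)⁻¹ * g⁻¹ * engel x g n * g

/-- `g` is a left Engel element of `G`. -/
def IsLeftEngel {G : Type*} [Group G] (g : G) : Prop :=
  ∀ x : G, ∃ n, 1 ≤ n ∧ engel x g n = 1

section Engel

variable {G : Type*} [Group G]

theorem engel_one (x g : G) : engel x g 1 = x⁻¹ * g⁻¹ * x * g := rfl

theorem engel_two_eq_one_of_commute {x g : G} (h : Commute (engel x g 1) g) :
    engel x g 2 = 1 := by
  change (engel x g 1)⁻¹ * g⁻¹ * engel x g 1 * g = 1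
  rw [mul_assoc _ (engel x g 1), h.eq]
  group

theorem isLeftEngel_of_mem_of_commutative_normal {S : Subgroup G} (hS : S.Normal)
    (hab : ∀ a ∈ S, ∀ b ∈ S, a * b = b * a) {s : G} (hs : s ∈ S) : IsLeftEngel s := by
  intro x
  have hconj : x⁻¹ * s⁻¹ * x ∈ S := by
    simpa only [inv_inv] using hS.conj_mem s⁻¹ (S.inv_mem hs) x⁻¹
  have hcomm : engel x s 1 ∈ S := engel_one x s ▸ S.mul_mem hconj hs
  exact ⟨2, one_le_two, engel_two_eq_one_of_commute (hab _ hcomm s hs)⟩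

end Engel

theorem Subgroup.eq_top_of_le_of_not_le_of_index_prime {G : Type*} [Group G]
    {H K : Subgroup G} (hHK : H ≤ K) (hKH : ¬K ≤ H) (hp : H.index.Prime) : K = ⊤ := by
  have hdvd : K.index ∣ H.index := Subgroup.index_dvd_of_le hHK
  rcases hp.eq_one_or_self_of_dvd _ hdvd with hK | hK
  · exact Subgroup.index_eq_one.mp hK
  · refine absurd (Subgroup.relIndex_eq_one.mp ?_) hKH
    have hmul := Subgroup.relIndex_mul_index hHK
    rw [hK] at hmul
    exact (mul_eq_right₀ hp.ne_zero).mp hmul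

theorem stmt_7 {G : Type*} [Group G] (S : Subgroup G) (hS : S.Normal)
    (hab : ∀ a ∈ S, ∀ b ∈ S, a * b = b * a)
    (p : ℕ) (hp : p.Prime) (hidx : S.index = p)
    (L : Subgroup G) (hL : (L : Set G) = {g : G | IsLeftEngel g})
    (hns : ¬ {g : G | IsLeftEngel g} ⊆ (S : Set G)) :
    ∀ g : G, IsLeftEngel g := by
  rw [← hL] at hns
  have hSL : S ≤ L := fun s hs => by
    rw [← SetLike.mem_coe, hL]
    exact isLeftEngel_of_mem_of_commutative_normal hS hab hs
  have hLtop : L = ⊤ :=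
    Subgroup.eq_top_of_le_of_not_le_of_index_prime hSL hns (hidx ▸ hp)
  intro g
  have hg : g ∈ (L : Set G) := by simp [hLtop]
  rwa [hL] at hg
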